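/- arXiv:2505.02723 — 2 statements merged into one kernel-verified Lean document; each statement's English description precedes it below -/
import Mathlib

section
/- Let β ∈ (0, 10⁻²) and d ≥ d₀(β). Let f be analytic with max_{ζ ∈ D(z, d^{−5/4+β})} |f^{(j)}(ζ)| ≤ d^{j+1/2}(log d)² for j = 2, 3. Suppose ε > d^{−β}, t ∈ (0, d^{−5/4+β}), f(z) = 0, |f′(z)| ≥ ε d^{5/4}, and there exists w ∈ D(z, t) with w ≠ z and f(w) = 0. Then 2|f′(z)|/|f″(z)| ≤ t·(1 + d^{−β}). -/
open Set Filter Real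

private lemma iteratedDerivWithin_Icc_eq {h : ℝ → ℂ} :
    ∀ (k : ℕ), (∀ m : ℕ, ∀ y ∈ Set.Icc (0:ℝ) 1, DifferentiableAt ℝ (iteratedDeriv m h) y) →
    ∀ y ∈ Set.Icc (0:ℝ) 1, iteratedDerivWithin k h (Set.Icc 0 1) y = iteratedDeriv k h y := by
  intro k
  induction k with
  | zero => intro _ y _; simp
  | succ k ih =>
    intro hd y hy
    have hu := (uniqueDiffOn_Icc (zero_lt_one)) y hy
    rw [iteratedDerivWithin_succ, iteratedDeriv_succ]
    have hEq : Set.EqOn (iteratedDerivWithin k h (Set.Icc 0 1)) (iteratedDeriv k h)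
        (Set.Icc 0 1) := fun x hx => ih hd x hx
    rw [derivWithin_congr hEq (hEq hy)]
    exact (hd k y hy).derivWithin hu

set_option maxHeartbeats 1000000 in
/-- For every `β ∈ (0,10⁻²)` there is `d₀(β)` such that for `d ≥ d₀`: if `f` is
analytic near `D(z, d^{−5/4+β})` with `|f^{(j)}| ≤ d^{j+1/2}(log d)²` there for
`j = 2,3`, `ε > d^{−β}`, `t ∈ (0, d^{−5/4+β})`, `f(z) = 0`, `|f′(z)| ≥ εd^{5/4}`,
and `f` has another zero `w ≠ z` in `D(z,t)`, then
`2|f′(z)|/|f″(z)| ≤ t(1 + d^{−β})`. -/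
theorem stmt_11 (β : ℝ) (hβ0 : 0 < β) (hβ1 : β < 1 / 100) :
    ∃ d₀ : ℝ, ∀ d : ℝ, d₀ ≤ d →
      ∀ (z : ℂ) (f : ℂ → ℂ) (ε t : ℝ),
        AnalyticOnNhd ℂ f (Metric.closedBall z (d ^ (-(5:ℝ)/4 + β))) →
        (∀ j : ℕ, j = 2 ∨ j = 3 →
          ∀ ζ ∈ Metric.closedBall z (d ^ (-(5:ℝ)/4 + β)),
            ‖iteratedDeriv j f ζ‖ ≤ d ^ ((j : ℝ) + 1/2) * (Real.log d) ^ 2) →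
        d ^ (-β) < ε → 0 < t → t < d ^ (-(5:ℝ)/4 + β) →
        f z = 0 → ε * d ^ ((5:ℝ)/4) ≤ ‖deriv f z‖ →
        (∃ w ∈ Metric.closedBall z t, w ≠ z ∧ f w = 0) →
        2 * ‖deriv f z‖ / ‖iteratedDeriv 2 f z‖ ≤ t * (1 + d ^ (-β)) := by
  -- eventual conditions on d
  have hγ3 : (0:ℝ) < 1/4 - 5*β := by linarith
  have hγ4 : (0:ℝ) < 1/4 - 4*β := by linarith
  have h2' : ∀ᶠ d in atTop, (Real.log d) ^ 2 ≤ d ^ β := by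
    have hlo := (isLittleO_log_rpow_atTop (half_pos hβ0)).bound one_pos
    filter_upwards [hlo, eventually_ge_atTop (1:ℝ)] with x hx hx1
    have hx0 : (0:ℝ) < x := lt_of_lt_of_le one_pos hx1
    have h1 : |Real.log x| ≤ x ^ (β/2) := by
      have := hx
      rw [Real.norm_eq_abs, Real.norm_eq_abs, one_mul] at this
      calc |Real.log x| ≤ |x ^ (β/2)| := this
        _ = x ^ (β/2) := abs_of_nonneg (Real.rpow_nonneg hx0.le _)
    calc (Real.log x) ^ 2 = |Real.log x| * |Real.log x| := by
          rw [← abs_mul, abs_of_nonneg (mul_self_nonneg _), sq]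
      _ ≤ x ^ (β/2) * x ^ (β/2) := by
          exact mul_le_mul h1 h1 (abs_nonneg _) (Real.rpow_nonneg hx0.le _)
      _ = x ^ β := by rw [← Real.rpow_add hx0]; ring_nf
  have h3' : ∀ᶠ d in atTop, (2:ℝ) ≤ d ^ ((1:ℝ)/4 - 5*β) :=
    (tendsto_rpow_atTop hγ3).eventually_ge_atTop 2
  have h4' : ∀ᶠ d in atTop, (2:ℝ) ≤ d ^ ((1:ℝ)/4 - 4*β) :=
    (tendsto_rpow_atTop hγ4).eventually_ge_atTop 2
  obtain ⟨d₀, hd₀⟩ := eventually_atTop.mp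
    ((eventually_ge_atTop (2:ℝ)).and (h2'.and (h3'.and h4')))
  refine ⟨d₀, fun d hd z f ε t hfa hbound hε ht0 ht1 hfz hA' hw => ?_⟩
  obtain ⟨hd2, hlog, hc3, hc4⟩ := hd₀ d hd
  have d0 : (0:ℝ) < d := by linarith
  have d1 : (1:ℝ) ≤ d := by linarith
  obtain ⟨w, hwmem, hwz, hfw⟩ := hw
  set R : ℝ := d ^ (-(5:ℝ)/4 + β) with hRdef
  set c : ℂ := w - z with hcdef
  have hc0 : c ≠ 0 := sub_ne_zero.mpr hwz
  have hs0 : 0 < ‖c‖ := norm_pos_iff.mpr hc0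
  have hst : ‖c‖ ≤ t := by
    rw [Metric.mem_closedBall, dist_eq_norm] at hwmem; exact hwmem
  have htR : t ≤ R := le_of_lt ht1
  -- analyticity domain
  set U : Set ℂ := {x | AnalyticAt ℂ f x} with hUdef
  have hUopen : IsOpen U := isOpen_analyticAt ℂ f
  have hsub : Metric.closedBall z R ⊆ U := fun x hx => hfa x hx
  have hAk : ∀ k : ℕ, AnalyticOnNhd ℂ (iteratedDeriv k f) U := by
    intro k
    induction k with
    | zero =>
      rw [iteratedDeriv_zero]
      exact fun x hx => hx
    | succ k ih => rw [iteratedDeriv_succ]; exact ih.deriv_of_isOpen hUopen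
  set L : ℝ → ℂ := fun u => z + u * c with hLdef
  set h : ℝ → ℂ := fun u => f (L u) with hhdef
  have hLcont : Continuous L := by
    apply continuous_const.add (Continuous.mul _ continuous_const)
    exact Complex.continuous_ofReal
  set V : Set ℝ := L ⁻¹' U with hVdef
  have hVopen : IsOpen V := hUopen.preimage hLcont
  have hmemball : ∀ u : ℝ, |u| ≤ 1 → L u ∈ Metric.closedBall z R := by
    intro u hu
    rw [Metric.mem_closedBall, dist_eq_norm]
    have : L u - z = (u:ℂ) * c := by simp [hLdef]
    rw [this, norm_mul, Complex.norm_real, Real.norm_eq_abs]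
    calc |u| * ‖c‖ ≤ 1 * ‖c‖ := by
          exact mul_le_mul_of_nonneg_right hu (norm_nonneg _)
      _ = ‖c‖ := one_mul _
      _ ≤ t := hst
      _ ≤ R := htR
  have hIccV : Set.Icc (0:ℝ) 1 ⊆ V := by
    intro u hu
    exact hsub (hmemball u (by rw [abs_of_nonneg hu.1]; exact hu.2))
  have hLder : ∀ u : ℝ, HasDerivAt L c u := by
    intro u
    have h2 : HasDerivAt (fun x : ℂ => z + x * c) c (u:ℂ) := by
      simpa using ((hasDerivAt_id ((u:ℝ):ℂ)).mul_const c).const_add z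
    exact h2.comp_ofReal
  -- derivative of composed map
  have hcomp : ∀ k : ℕ, ∀ u : ℝ, L u ∈ U →
      HasDerivAt (fun x : ℝ => iteratedDeriv k f (L x)) (iteratedDeriv (k+1) f (L u) * c) u := by
    intro k u hu
    have hg : HasDerivAt (iteratedDeriv k f) (iteratedDeriv (k+1) f (L u)) (L u) := by
      have := ((hAk k (L u) hu).differentiableAt).hasDerivAt
      rwa [iteratedDeriv_succ]
    have hin : HasDerivAt (fun x : ℂ => z + x * c) c ((u:ℝ):ℂ) := by
      simpa using ((hasDerivAt_id ((u:ℝ):ℂ)).mul_const c).const_add z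
    have h1 : HasDerivAt (fun x : ℂ => iteratedDeriv k f (z + x * c))
        (iteratedDeriv (k+1) f (L u) * c) ((u:ℝ):ℂ) := by
      have := HasDerivAt.comp (h₂ := iteratedDeriv k f) (h := fun x : ℂ => z + x * c)
        (x := ((u:ℝ):ℂ)) (by simpa [hLdef] using hg) hin
      exact this
    exact h1.comp_ofReal
  -- the key formula
  have hform : ∀ k : ℕ, ∀ u, u ∈ V → iteratedDeriv k h u = iteratedDeriv k f (L u) * c ^ k := by
    intro k
    induction k with
    | zero => intro u _; simp [hhdef]
    | succ k ih =>
      intro u hu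
      have hev : iteratedDeriv k h =ᶠ[nhds u] fun x => iteratedDeriv k f (L x) * c ^ k :=
        Filter.eventually_of_mem (hVopen.mem_nhds hu) ih
      rw [iteratedDeriv_succ, hev.deriv_eq, ((hcomp k u hu).mul_const (c ^ k)).deriv]
      ring
  have hdiff : ∀ k : ℕ, ∀ u, u ∈ V → DifferentiableAt ℝ (iteratedDeriv k h) u := by
    intro k u hu
    have hev : iteratedDeriv k h =ᶠ[nhds u] fun x => iteratedDeriv k f (L x) * c ^ k :=
      Filter.eventually_of_mem (hVopen.mem_nhds hu) (hform k)
    exact hev.differentiableAt_iff.mpr ((hcomp k u hu).mul_const (c ^ k)).differentiableAt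
  have hdIcc : ∀ m : ℕ, ∀ y ∈ Set.Icc (0:ℝ) 1, DifferentiableAt ℝ (iteratedDeriv m h) y :=
    fun m y hy => hdiff m y (hIccV hy)
  -- smoothness of h on [0,1]
  have hcd : ContDiffOn ℝ 3 h (Set.Icc (0:ℝ) 1) := by
    intro u hu
    have hfc : ContDiffAt ℝ 3 f (L u) :=
      ((hIccV hu : L u ∈ U) : AnalyticAt ℂ f (L u)).contDiffAt.restrict_scalars ℝ
    have hLc : ContDiffAt ℝ 3 L u := by
      apply ContDiffAt.add contDiffAt_const
      exact (Complex.ofRealCLM.contDiff.contDiffAt).mul contDiffAt_const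
    exact (hfc.comp u hLc).contDiffWithinAt
  -- bound on the third derivative along the segment
  set M : ℝ := d ^ ((3:ℝ) + 1/2) * (Real.log d) ^ 2 with hMdef
  have hM0 : 0 ≤ M := by positivity
  have hC : ∀ y ∈ Set.Icc (0:ℝ) 1,
      ‖iteratedDerivWithin 3 h (Set.Icc 0 1) y‖ ≤ M * ‖c‖ ^ 3 := by
    intro y hy
    rw [iteratedDerivWithin_Icc_eq 3 hdIcc y hy, hform 3 y (hIccV hy)]
    rw [norm_mul, norm_pow]
    have hmem : L y ∈ Metric.closedBall z R :=
      hmemball y (by rw [abs_of_nonneg hy.1]; exact hy.2)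
    have hb := hbound 3 (Or.inr rfl) (L y) hmem
    have hb' : ‖iteratedDeriv 3 f (L y)‖ ≤ M := by
      rw [hMdef]; exact_mod_cast hb
    exact mul_le_mul_of_nonneg_right hb' (by positivity)
  have h1mem : (1:ℝ) ∈ Set.Icc (0:ℝ) 1 := by norm_num
  have htay := taylor_mean_remainder_bound (n := 2) zero_le_one hcd h1mem hC
  -- compute the Taylor polynomial
  have h0V : (0:ℝ) ∈ V := hIccV (by norm_num)
  have hL0 : L 0 = z := by simp [hLdef]
  have htEval : taylorWithinEval h 2 (Set.Icc (0:ℝ) 1) 0 1 =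
      deriv f z * c + ((2:ℝ)⁻¹ : ℝ) • (iteratedDeriv 2 f z * c ^ 2) := by
    rw [taylor_within_apply]
    have h0mem : (0:ℝ) ∈ Set.Icc (0:ℝ) 1 := by norm_num
    have e0 : iteratedDerivWithin 0 h (Set.Icc 0 1) 0 = 0 := by
      simp [hhdef, hL0, hfz]
    have e1 : iteratedDerivWithin 1 h (Set.Icc 0 1) 0 = deriv f z * c := by
      rw [iteratedDerivWithin_Icc_eq 1 hdIcc 0 h0mem, hform 1 0 h0V, hL0]
      simp [iteratedDeriv_one]
    have e2 : iteratedDerivWithin 2 h (Set.Icc 0 1) 0 = iteratedDeriv 2 f z * c ^ 2 := by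
      rw [iteratedDerivWithin_Icc_eq 2 hdIcc 0 h0mem, hform 2 0 h0V, hL0]
    rw [Finset.sum_range_succ, Finset.sum_range_succ, Finset.sum_range_one, e0, e1, e2]
    norm_num
  have hh1 : h 1 = 0 := by
    have : L 1 = w := by simp [hLdef, hcdef]
    simp [hhdef, this, hfw]
  rw [htEval, hh1] at htay
  set A : ℝ := ‖deriv f z‖ with hAdef
  set B : ℝ := ‖iteratedDeriv 2 f z‖ with hBdef
  have hA0 : 0 ≤ A := norm_nonneg _
  have hB0 : 0 ≤ B := norm_nonneg _
  have key1 : ‖deriv f z * c + ((2:ℝ)⁻¹ : ℝ) • (iteratedDeriv 2 f z * c ^ 2)‖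
      ≤ M * ‖c‖ ^ 3 / 2 := by
    calc ‖deriv f z * c + ((2:ℝ)⁻¹ : ℝ) • (iteratedDeriv 2 f z * c ^ 2)‖
        = ‖(0:ℂ) - (deriv f z * c + ((2:ℝ)⁻¹ : ℝ) • (iteratedDeriv 2 f z * c ^ 2))‖ := by
          rw [zero_sub, norm_neg]
      _ ≤ M * ‖c‖ ^ 3 * ((1:ℝ) - 0) ^ (2 + 1) / (Nat.factorial 2) := htay
      _ = M * ‖c‖ ^ 3 / 2 := by norm_num [Nat.factorial]
  have keyAc : A * ‖c‖ ≤ M * ‖c‖ ^ 3 / 2 + B * ‖c‖ ^ 2 / 2 := by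
    have hq : ‖((2:ℝ)⁻¹ : ℝ) • (iteratedDeriv 2 f z * c ^ 2)‖ = B * ‖c‖ ^ 2 / 2 := by
      rw [norm_smul, Real.norm_eq_abs, norm_mul, norm_pow]
      rw [abs_of_nonneg (by norm_num : (0:ℝ) ≤ (2:ℝ)⁻¹)]
      ring
    have h1 : ‖deriv f z * c‖ ≤ ‖deriv f z * c + ((2:ℝ)⁻¹ : ℝ) •
        (iteratedDeriv 2 f z * c ^ 2)‖ + ‖((2:ℝ)⁻¹ : ℝ) • (iteratedDeriv 2 f z * c ^ 2)‖ := by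
      have := norm_sub_le (deriv f z * c + ((2:ℝ)⁻¹ : ℝ) • (iteratedDeriv 2 f z * c ^ 2))
        (((2:ℝ)⁻¹ : ℝ) • (iteratedDeriv 2 f z * c ^ 2))
      simpa using this
    rw [norm_mul] at h1
    calc A * ‖c‖ ≤ M * ‖c‖ ^ 3 / 2 + ‖((2:ℝ)⁻¹ : ℝ) • (iteratedDeriv 2 f z * c ^ 2)‖ := by
          exact h1.trans (by linarith [key1])
      _ = M * ‖c‖ ^ 3 / 2 + B * ‖c‖ ^ 2 / 2 := by rw [hq]
  -- divide by ‖c‖ and pass to t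
  have key : A ≤ M * t ^ 2 + B * t / 2 := by
    have hs2 : ‖c‖ ^ 2 ≤ t ^ 2 := by nlinarith
    have hbb1 : M * ‖c‖ ^ 3 / 2 ≤ M * t ^ 2 * ‖c‖ := by
      have hint1 : M * ‖c‖ * ‖c‖ ^ 2 ≤ M * ‖c‖ * t ^ 2 :=
        mul_le_mul_of_nonneg_left hs2 (mul_nonneg hM0 hs0.le)
      have hpos : (0:ℝ) ≤ M * ‖c‖ ^ 3 := by positivity
      nlinarith [hint1, hpos]
    have hbb2 : B * ‖c‖ ^ 2 / 2 ≤ B * t * ‖c‖ / 2 := by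
      have hint2 : B * ‖c‖ * ‖c‖ ≤ B * ‖c‖ * t :=
        mul_le_mul_of_nonneg_left hst (mul_nonneg hB0 hs0.le)
      nlinarith [hint2]
    have hmul : A * ‖c‖ ≤ (M * t ^ 2 + B * t / 2) * ‖c‖ := by
      have expand : (M * t ^ 2 + B * t / 2) * ‖c‖ = M * t ^ 2 * ‖c‖ + B * t * ‖c‖ / 2 := by
        ring
      rw [expand]; linarith [keyAc, hbb1, hbb2]
    exact le_of_mul_le_mul_right hmul hs0
  -- scalar endgame
  have hAlow : d ^ ((5:ℝ)/4 - β) ≤ A := by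
    have : d ^ ((5:ℝ)/4 - β) = d ^ (-β) * d ^ ((5:ℝ)/4) := by
      rw [← Real.rpow_add d0]; ring_nf
    rw [this]
    calc d ^ (-β) * d ^ ((5:ℝ)/4) ≤ ε * d ^ ((5:ℝ)/4) := by
          exact mul_le_mul_of_nonneg_right hε.le (Real.rpow_nonneg d0.le _)
      _ ≤ A := hA'
  have hMt2 : M * t ^ 2 ≤ d ^ ((1:ℝ) + 3*β) := by
    have ht2 : t ^ 2 ≤ (d ^ (-(5:ℝ)/4 + β)) ^ 2 := by nlinarith
    have e1 : (d ^ (-(5:ℝ)/4 + β)) ^ (2:ℕ) = d ^ ((-(5:ℝ)/4 + β) * 2) := by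
      rw [← Real.rpow_natCast (d ^ (-(5:ℝ)/4 + β)) 2, ← Real.rpow_mul d0.le]
      norm_num
    calc M * t ^ 2 ≤ M * (d ^ (-(5:ℝ)/4 + β)) ^ 2 := by
          exact mul_le_mul_of_nonneg_left ht2 hM0
      _ = d ^ ((3:ℝ) + 1/2) * (Real.log d) ^ 2 * d ^ ((-(5:ℝ)/4 + β) * 2) := by
          rw [hMdef, e1]
      _ ≤ d ^ ((3:ℝ) + 1/2) * d ^ β * d ^ ((-(5:ℝ)/4 + β) * 2) := by
          gcongr
      _ = d ^ ((1:ℝ) + 3*β) := by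
          rw [← Real.rpow_add d0, ← Real.rpow_add d0]; ring_nf
  have hexp1 : 2 * d ^ ((1:ℝ) + 3*β) ≤ d ^ ((5:ℝ)/4 - 2*β) := by
    calc 2 * d ^ ((1:ℝ) + 3*β) ≤ d ^ ((1:ℝ)/4 - 5*β) * d ^ ((1:ℝ) + 3*β) := by
          exact mul_le_mul_of_nonneg_right hc3 (Real.rpow_nonneg d0.le _)
      _ = d ^ ((5:ℝ)/4 - 2*β) := by rw [← Real.rpow_add d0]; ring_nf
  have hexp2 : d ^ ((5:ℝ)/4 - 2*β) ≤ d ^ ((5:ℝ)/4 - β) :=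
    Real.rpow_le_rpow_of_exponent_le d1 (by linarith)
  have h2Mt2A : 2 * (M * t ^ 2) ≤ A :=
    by linarith [hMt2, hexp1, hexp2, hAlow]
  have hABt : A ≤ B * t := by linarith [key]
  have hdpos : 0 < d ^ ((5:ℝ)/4 - β) := Real.rpow_pos_of_pos d0 _
  have hBpos : 0 < B := by nlinarith
  have hstep : 2 * (M * t ^ 2) ≤ d ^ (-β) * A := by
    have : d ^ ((5:ℝ)/4 - 2*β) ≤ d ^ (-β) * A := by
      have e : d ^ ((5:ℝ)/4 - 2*β) = d ^ (-β) * d ^ ((5:ℝ)/4 - β) := by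
        rw [← Real.rpow_add d0]; ring_nf
      rw [e]
      exact mul_le_mul_of_nonneg_left hAlow (Real.rpow_nonneg d0.le _)
    linarith [hMt2, hexp1]
  rw [div_le_iff₀ hBpos]
  have hdb0 : 0 ≤ d ^ (-β) := Real.rpow_nonneg d0.le _
  calc 2 * A ≤ 2 * (M * t ^ 2) + B * t := by linarith [key]
    _ ≤ d ^ (-β) * A + B * t := by linarith [hstep]
    _ ≤ d ^ (-β) * (B * t) + B * t := by
        exact add_le_add_left (mul_le_mul_of_nonneg_left hABt hdb0) _
    _ = t * (1 + d ^ (-β)) * B := by ring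
end

section
/- The function 𝔉(x) = (1/2π)·(a₄(x)⁵/η(x))·(1 + (1/Δ₂(x))·(a₄(x)²Δ₁(x)²/η(x) + a₄(x)a₃(x)²))^{−3} satisfies: there is an absolute constant C > 0 such that e^x 𝔉(x) ≤ C for all x ≥ 1, and x¹⁶ 𝔉(x) ≤ C for all x < −1. In particular, ∫_ℝ 𝔉(x) dx < ∞. -/
/-- The moment integrals `a_j(x) = ∫₀¹ t^j e^{2xt} dt`. -/
noncomputable def aj (j : ℕ) (x : ℝ) : ℝ := ∫ t in (0:ℝ)..1, t ^ j * Real.exp (2 * x * t)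

/-- `Δ₁(x) = a₁a₃ − a₂²`. -/
noncomputable def Δ₁ (x : ℝ) : ℝ := aj 1 x * aj 3 x - aj 2 x ^ 2

/-- `Δ₂(x) = a₂a₄ − a₃²`. -/
noncomputable def Δ₂ (x : ℝ) : ℝ := aj 2 x * aj 4 x - aj 3 x ^ 2

/-- `η(x) = a₀a₂a₄ − a₀a₃² − a₁²a₄ + 2a₁a₂a₃ − a₂³`. -/
noncomputable def η (x : ℝ) : ℝ :=
  aj 0 x * aj 2 x * aj 4 x - aj 0 x * aj 3 x ^ 2 - aj 1 x ^ 2 * aj 4 x +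
    2 * aj 1 x * aj 2 x * aj 3 x - aj 2 x ^ 3

/-- The limiting intensity function `𝔉`. -/
noncomputable def frakF (x : ℝ) : ℝ :=
  (1 / (2 * Real.pi)) * (aj 4 x ^ 5 / η x) *
    ((1 + (1 / Δ₂ x) * (aj 4 x ^ 2 * Δ₁ x ^ 2 / η x + aj 4 x * aj 3 x ^ 2)) ^ 3)⁻¹


section Aux
open MeasureTheory intervalIntegral Real Set

lemma int_poly (x c₀ c₁ c₂ c₃ c₄ : ℝ) :
    ∫ v in (0:ℝ)..1, (c₀ + c₁*v + c₂*v^2 + c₃*v^3 + c₄*v^4) * Real.exp (2*x*v)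
      = c₀ * aj 0 x + c₁ * aj 1 x + c₂ * aj 2 x + c₃ * aj 3 x + c₄ * aj 4 x := by
  have hInt : ∀ (c : ℝ) (j : ℕ),
      IntervalIntegrable (fun v : ℝ => c * (v ^ j * Real.exp (2*x*v))) volume 0 1 := by
    intro c j
    apply Continuous.intervalIntegrable; fun_prop
  have key : ∀ (c : ℝ) (j : ℕ),
      (∫ v in (0:ℝ)..1, c * (v ^ j * Real.exp (2*x*v))) = c * aj j x := by
    intro c j
    rw [intervalIntegral.integral_const_mul]; rfl
  calc ∫ v in (0:ℝ)..1, (c₀ + c₁*v + c₂*v^2 + c₃*v^3 + c₄*v^4) * Real.exp (2*x*v)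
      = ∫ v in (0:ℝ)..1, (c₀ * (v^0 * Real.exp (2*x*v)) + c₁ * (v^1 * Real.exp (2*x*v))
          + c₂ * (v^2 * Real.exp (2*x*v)) + c₃ * (v^3 * Real.exp (2*x*v))
          + c₄ * (v^4 * Real.exp (2*x*v))) := by
        apply intervalIntegral.integral_congr
        intro v _
        ring
    _ = c₀ * aj 0 x + c₁ * aj 1 x + c₂ * aj 2 x + c₃ * aj 3 x + c₄ * aj 4 x := by
        rw [intervalIntegral.integral_add, intervalIntegral.integral_add,
          intervalIntegral.integral_add, intervalIntegral.integral_add,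
          key, key, key, key, key]
        · exact hInt ..
        · exact hInt ..
        · exact (hInt ..).add (hInt ..)
        · exact hInt ..
        · exact ((hInt ..).add (hInt ..)).add (hInt ..)
        · exact hInt ..
        · exact (((hInt ..).add (hInt ..)).add (hInt ..)).add (hInt ..)
        · exact hInt ..

noncomputable def g1 (x t u : ℝ) : ℝ :=
  (t^2*u^4 - 2*t^3*u^3 + t^4*u^2) * aj 0 x
  + (-2*t*u^4 + 2*t^2*u^3 + 2*t^3*u^2 - 2*t^4*u) * aj 1 x
  + (u^4 + 2*t*u^3 - 6*t^2*u^2 + 2*t^3*u + t^4) * aj 2 x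
  + (-2*u^3 + 2*t*u^2 + 2*t^2*u - 2*t^3) * aj 3 x
  + (u^2 - 2*t*u + t^2) * aj 4 x

noncomputable def g2 (x t : ℝ) : ℝ :=
  (2*(aj 2 x * aj 4 x) - 2*(aj 3 x)^2)
  + (-4*(aj 1 x * aj 4 x) + 4*(aj 2 x * aj 3 x)) * t
  + (2*(aj 0 x * aj 4 x) + 4*(aj 1 x * aj 3 x) - 6*(aj 2 x)^2) * t^2
  + (-4*(aj 0 x * aj 3 x) + 4*(aj 1 x * aj 2 x)) * t^3
  + (2*(aj 0 x * aj 2 x) - 2*(aj 1 x)^2) * t^4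

lemma L1 (x t u : ℝ) :
    (∫ v in (0:ℝ)..1, ((u-t)*(v-t)*(v-u))^2 * Real.exp (2*x*v)) = g1 x t u := by
  have h := int_poly x (t^2*u^4 - 2*t^3*u^3 + t^4*u^2)
    (-2*t*u^4 + 2*t^2*u^3 + 2*t^3*u^2 - 2*t^4*u)
    (u^4 + 2*t*u^3 - 6*t^2*u^2 + 2*t^3*u + t^4)
    (-2*u^3 + 2*t*u^2 + 2*t^2*u - 2*t^3)
    (u^2 - 2*t*u + t^2)
  calc (∫ v in (0:ℝ)..1, ((u-t)*(v-t)*(v-u))^2 * Real.exp (2*x*v))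
      = ∫ v in (0:ℝ)..1, ((t^2*u^4 - 2*t^3*u^3 + t^4*u^2)
          + (-2*t*u^4 + 2*t^2*u^3 + 2*t^3*u^2 - 2*t^4*u)*v
          + (u^4 + 2*t*u^3 - 6*t^2*u^2 + 2*t^3*u + t^4)*v^2
          + (-2*u^3 + 2*t*u^2 + 2*t^2*u - 2*t^3)*v^3
          + (u^2 - 2*t*u + t^2)*v^4) * Real.exp (2*x*v) := by
        apply intervalIntegral.integral_congr; intro v _; ring
    _ = g1 x t u := by rw [h]; unfold g1; ring

lemma L2 (x t : ℝ) :
    (∫ u in (0:ℝ)..1, g1 x t u * Real.exp (2*x*u)) = g2 x t := by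
  have h := int_poly x
    ((1)*t^2*aj 4 x + (-2)*t^3*aj 3 x + (1)*t^4*aj 2 x)
    ((-2)*t*aj 4 x + (2)*t^2*aj 3 x + (2)*t^3*aj 2 x + (-2)*t^4*aj 1 x)
    ((1)*aj 4 x + (2)*t*aj 3 x + (-6)*t^2*aj 2 x + (2)*t^3*aj 1 x + (1)*t^4*aj 0 x)
    ((-2)*aj 3 x + (2)*t*aj 2 x + (2)*t^2*aj 1 x + (-2)*t^3*aj 0 x)
    ((1)*aj 2 x + (-2)*t*aj 1 x + (1)*t^2*aj 0 x)
  calc (∫ u in (0:ℝ)..1, g1 x t u * Real.exp (2*x*u))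
      = ∫ u in (0:ℝ)..1, (((1)*t^2*aj 4 x + (-2)*t^3*aj 3 x + (1)*t^4*aj 2 x)
          + ((-2)*t*aj 4 x + (2)*t^2*aj 3 x + (2)*t^3*aj 2 x + (-2)*t^4*aj 1 x)*u
          + ((1)*aj 4 x + (2)*t*aj 3 x + (-6)*t^2*aj 2 x + (2)*t^3*aj 1 x + (1)*t^4*aj 0 x)*u^2
          + ((-2)*aj 3 x + (2)*t*aj 2 x + (2)*t^2*aj 1 x + (-2)*t^3*aj 0 x)*u^3
          + ((1)*aj 2 x + (-2)*t*aj 1 x + (1)*t^2*aj 0 x)*u^4) * Real.exp (2*x*u) := by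
        apply intervalIntegral.integral_congr; intro u _; unfold g1; ring
    _ = g2 x t := by rw [h]; unfold g2; ring

lemma L3 (x : ℝ) :
    (∫ t in (0:ℝ)..1, g2 x t * Real.exp (2*x*t)) = 6 * η x := by
  have h := int_poly x
    (2*(aj 2 x * aj 4 x) - 2*(aj 3 x)^2)
    (-4*(aj 1 x * aj 4 x) + 4*(aj 2 x * aj 3 x))
    (2*(aj 0 x * aj 4 x) + 4*(aj 1 x * aj 3 x) - 6*(aj 2 x)^2)
    (-4*(aj 0 x * aj 3 x) + 4*(aj 1 x * aj 2 x))
    (2*(aj 0 x * aj 2 x) - 2*(aj 1 x)^2)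
  calc (∫ t in (0:ℝ)..1, g2 x t * Real.exp (2*x*t))
      = ∫ t in (0:ℝ)..1, ((2*(aj 2 x * aj 4 x) - 2*(aj 3 x)^2)
          + (-4*(aj 1 x * aj 4 x) + 4*(aj 2 x * aj 3 x))*t
          + (2*(aj 0 x * aj 4 x) + 4*(aj 1 x * aj 3 x) - 6*(aj 2 x)^2)*t^2
          + (-4*(aj 0 x * aj 3 x) + 4*(aj 1 x * aj 2 x))*t^3
          + (2*(aj 0 x * aj 2 x) - 2*(aj 1 x)^2)*t^4) * Real.exp (2*x*t) := by
        apply intervalIntegral.integral_congr; intro t _; unfold g2; ring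
    _ = 6 * η x := by rw [h]; unfold η; ring

lemma low (f : ℝ → ℝ) (hf : IntervalIntegrable f volume 0 1)
    (h0 : ∀ t ∈ Icc (0:ℝ) 1, 0 ≤ f t) {c d m : ℝ} (hc : 0 ≤ c) (hcd : c ≤ d) (hd : d ≤ 1)
    (hm : ∀ t ∈ Icc c d, m ≤ f t) : m * (d - c) ≤ ∫ t in (0:ℝ)..1, f t := by
  have hd0 : (0:ℝ) ≤ d := le_trans hc hcd
  have hc1 : c ≤ 1 := le_trans hcd hd
  have hsub : ∀ p q : ℝ, 0 ≤ p → p ≤ q → q ≤ 1 → IntervalIntegrable f volume p q := by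
    intro p q hp hpq hq
    apply hf.mono_set
    rw [Set.uIcc_of_le hpq, Set.uIcc_of_le zero_le_one]
    exact Icc_subset_Icc hp hq
  have e1 : (∫ t in (0:ℝ)..c, f t) + (∫ t in c..d, f t) = ∫ t in (0:ℝ)..d, f t :=
    integral_add_adjacent_intervals (hsub 0 c le_rfl hc hc1) (hsub c d hc hcd hd)
  have e2 : (∫ t in (0:ℝ)..d, f t) + (∫ t in d..(1:ℝ), f t) = ∫ t in (0:ℝ)..1, f t :=
    integral_add_adjacent_intervals (hsub 0 d le_rfl hd0 hd) (hsub d 1 hd0 hd le_rfl)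
  have p1 : 0 ≤ ∫ t in (0:ℝ)..c, f t :=
    intervalIntegral.integral_nonneg hc (fun t ht => h0 t ⟨ht.1, le_trans ht.2 hc1⟩)
  have p3 : 0 ≤ ∫ t in d..(1:ℝ), f t :=
    intervalIntegral.integral_nonneg hd (fun t ht => h0 t ⟨le_trans hd0 ht.1, ht.2⟩)
  have p2 : m * (d - c) ≤ ∫ t in c..d, f t := by
    have := intervalIntegral.integral_mono_on hcd (_root_.intervalIntegrable_const (c := m))
      (hsub c d hc hcd hd) hm
    simpa [intervalIntegral.integral_const, smul_eq_mul, mul_comm] using this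
  linarith

lemma g1_nonneg (x t u : ℝ) : 0 ≤ g1 x t u := by
  rw [← L1]
  apply intervalIntegral.integral_nonneg zero_le_one
  intro v _; positivity

lemma g2_nonneg (x t : ℝ) : 0 ≤ g2 x t := by
  rw [← L2]
  apply intervalIntegral.integral_nonneg zero_le_one
  intro u _
  exact mul_nonneg (g1_nonneg ..) (Real.exp_pos _).le

lemma eta_ge (x b δ m : ℝ) (hδ : 0 < δ) (hb : 0 ≤ b) (hb5 : b + 5*δ ≤ 1) (hm : 0 ≤ m)
    (hE : ∀ s ∈ Icc b (b+5*δ), m ≤ Real.exp (2*x*s)) :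
    3/2 * (m^3 * δ^9) ≤ η x := by
  have stepA : ∀ t ∈ Icc b (b+δ), ∀ u ∈ Icc (b+2*δ) (b+3*δ), 9*m*δ^7 ≤ g1 x t u := by
    intro t ht u hu
    rw [← L1]
    have h := low (fun v => ((u-t)*(v-t)*(v-u))^2 * Real.exp (2*x*v))
      (by apply Continuous.intervalIntegrable; fun_prop)
      (fun v _ => by positivity)
      (c := b+4*δ) (d := b+5*δ) (m := (9*δ^6)*m) (by linarith [ht.1]) (by linarith) hb5 ?_
    · calc 9*m*δ^7 = (9*δ^6)*m * ((b+5*δ) - (b+4*δ)) := by ring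
        _ ≤ _ := h
    · intro v hv
      have h1 : δ ≤ u - t := by linarith [ht.2, hu.1]
      have h2 : δ ≤ v - u := by linarith [hu.2, hv.1]
      have h3 : 3*δ ≤ v - t := by linarith [ht.2, hv.1]
      have hp : 3*(δ*δ*δ) ≤ (u-t)*((v-t)*(v-u)) := by
        have hq : (3*δ)*δ ≤ (v-t)*(v-u) := mul_le_mul h3 h2 hδ.le (by linarith)
        have := mul_le_mul h1 hq (by positivity) (by linarith)
        calc 3*(δ*δ*δ) = δ * ((3*δ)*δ) := by ring
          _ ≤ _ := this
      have hVsq : 9*δ^6 ≤ ((u-t)*(v-t)*(v-u))^2 := by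
        calc 9*δ^6 = (3*(δ*δ*δ))^2 := by ring
          _ ≤ ((u-t)*((v-t)*(v-u)))^2 := by
              apply pow_le_pow_left₀ (by positivity) hp
          _ = ((u-t)*(v-t)*(v-u))^2 := by ring
      have hEv : m ≤ Real.exp (2*x*v) := hE v ⟨by linarith [hv.1], hv.2⟩
      exact mul_le_mul hVsq hEv hm (by positivity)
  have stepB : ∀ t ∈ Icc b (b+δ), 9*m^2*δ^8 ≤ g2 x t := by
    intro t ht
    rw [← L2]
    have h := low (fun u => g1 x t u * Real.exp (2*x*u))
      (by apply Continuous.intervalIntegrable; unfold g1; fun_prop)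
      (fun u _ => mul_nonneg (g1_nonneg ..) (Real.exp_pos _).le)
      (c := b+2*δ) (d := b+3*δ) (m := (9*m*δ^7)*m) (by linarith [ht.1]) (by linarith)
      (by linarith) ?_
    · calc 9*m^2*δ^8 = (9*m*δ^7)*m * ((b+3*δ)-(b+2*δ)) := by ring
        _ ≤ _ := h
    · intro u hu
      exact mul_le_mul (stepA t ht u hu)
        (hE u ⟨by linarith [hu.1], by linarith [hu.2]⟩) hm (g1_nonneg ..)
  have h := low (fun t => g2 x t * Real.exp (2*x*t))
    (by apply Continuous.intervalIntegrable; unfold g2; fun_prop)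
    (fun t _ => mul_nonneg (g2_nonneg ..) (Real.exp_pos _).le)
    (c := b) (d := b+δ) (m := (9*m^2*δ^8)*m) hb (by linarith) (by linarith) ?_
  · rw [L3] at h
    have : 9*(m^3*δ^9) ≤ 6 * η x := by
      calc 9*(m^3*δ^9) = (9*m^2*δ^8)*m * ((b+δ)-b) := by ring
        _ ≤ _ := h
    linarith
  · intro t ht
    exact mul_le_mul (stepB t ht) (hE t ⟨ht.1, by linarith [ht.2]⟩) hm (g2_nonneg ..)

noncomputable def h1d (x t : ℝ) : ℝ := t^4 * aj 2 x - 2*t^3 * aj 3 x + t^2 * aj 4 x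

lemma LD1 (x t : ℝ) :
    (∫ u in (0:ℝ)..1, (t*u*(u-t))^2 * Real.exp (2*x*u)) = h1d x t := by
  have h := int_poly x 0 0 (t^4) (-2*t^3) (t^2)
  calc (∫ u in (0:ℝ)..1, (t*u*(u-t))^2 * Real.exp (2*x*u))
      = ∫ u in (0:ℝ)..1, (0 + 0*u + t^4*u^2 + (-2*t^3)*u^3 + t^2*u^4) * Real.exp (2*x*u) := by
        apply intervalIntegral.integral_congr; intro u _; ring
    _ = h1d x t := by rw [h]; unfold h1d; ring

lemma LD2 (x : ℝ) :
    (∫ t in (0:ℝ)..1, h1d x t * Real.exp (2*x*t)) = 2 * Δ₂ x := by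
  have h := int_poly x 0 0 (aj 4 x) (-2*aj 3 x) (aj 2 x)
  calc (∫ t in (0:ℝ)..1, h1d x t * Real.exp (2*x*t))
      = ∫ t in (0:ℝ)..1, (0 + 0*t + aj 4 x*t^2 + (-2*aj 3 x)*t^3 + aj 2 x*t^4)
          * Real.exp (2*x*t) := by
        apply intervalIntegral.integral_congr; intro t _; unfold h1d; ring
    _ = 2 * Δ₂ x := by rw [h]; unfold Δ₂; ring

lemma h1d_nonneg (x t : ℝ) : 0 ≤ h1d x t := by
  rw [← LD1]
  apply intervalIntegral.integral_nonneg zero_le_one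
  intro u _; positivity

lemma exp_abs_le (x : ℝ) {s : ℝ} (hs : s ∈ Icc (0:ℝ) 1) :
    Real.exp (-(2*|x|)) ≤ Real.exp (2*x*s) := by
  apply Real.exp_le_exp.2
  have h1 : |x * s| ≤ |x| := by
    rw [abs_mul]
    exact mul_le_of_le_one_right (abs_nonneg x) (abs_le.2 ⟨by linarith [hs.1], hs.2⟩)
  have h2 := neg_abs_le (x * s)
  nlinarith

lemma delta2_pos (x : ℝ) : 0 < Δ₂ x := by
  set m := Real.exp (-(2*|x|)) with hmdef
  have hmpos : 0 < m := Real.exp_pos _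
  have stepA : ∀ t ∈ Icc (1/5:ℝ) (2/5), (9/15625)*m*(1/5) ≤ h1d x t := by
    intro t ht
    rw [← LD1]
    have h := low (fun u => (t*u*(u-t))^2 * Real.exp (2*x*u))
      (by apply Continuous.intervalIntegrable; fun_prop)
      (fun u _ => by positivity)
      (c := 3/5) (d := 4/5) (m := (9/15625)*m) (by norm_num) (by norm_num) (by norm_num) ?_
    · calc (9/15625)*m*(1/5) = (9/15625)*m * ((4/5:ℝ) - 3/5) := by norm_num
        _ ≤ _ := h
    · intro u hu
      have hV : (9/15625 : ℝ) ≤ ((t*u*(u-t))^2) := by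
        have l3 : (1/5:ℝ) ≤ u - t := by linarith [ht.2, hu.1]
        have hq : (1/5:ℝ)*(3/5) ≤ t*u := mul_le_mul ht.1 hu.1 (by norm_num) (by linarith [ht.1, ht.2])
        have hp : (3/125:ℝ) ≤ t*u*(u-t) := by
          have := mul_le_mul hq l3 (by norm_num) (by nlinarith [ht.1, hu.1])
          linarith
        have := pow_le_pow_left₀ (by norm_num : (0:ℝ) ≤ 3/125) hp 2
        calc (9/15625:ℝ) = (3/125)^2 := by norm_num
          _ ≤ _ := this
      have hEv : m ≤ Real.exp (2*x*u) := exp_abs_le x ⟨by linarith [hu.1], by linarith [hu.2]⟩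
      exact mul_le_mul hV hEv hmpos.le (by positivity)
  have h := low (fun t => h1d x t * Real.exp (2*x*t))
    (by apply Continuous.intervalIntegrable; unfold h1d; fun_prop)
    (fun t _ => mul_nonneg (h1d_nonneg ..) (Real.exp_pos _).le)
    (c := 1/5) (d := 2/5) (m := (9/15625)*m*(1/5)*m) (by norm_num) (by norm_num) (by norm_num) ?_
  · rw [LD2] at h
    nlinarith [h, hmpos]
  · intro t ht
    exact mul_le_mul (stepA t ht)
      (exp_abs_le x ⟨by linarith [ht.1], by linarith [ht.2]⟩) hmpos.le (h1d_nonneg ..)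

lemma aj_pos (j : ℕ) (x : ℝ) : 0 < aj j x := by
  have h := low (fun t => t^j * Real.exp (2*x*t))
    (by apply Continuous.intervalIntegrable; fun_prop)
    (fun t ht => mul_nonneg (pow_nonneg ht.1 j) (Real.exp_pos _).le)
    (c := 1/2) (d := 1) (m := (1/2)^j * Real.exp (-(2*|x|)))
    (by norm_num) (by norm_num) (by norm_num) ?_
  · have hpos : (0:ℝ) < (1/2)^j * Real.exp (-(2*|x|)) * (1 - 1/2) := by
      have := Real.exp_pos (-(2*|x|))
      have h2 : (0:ℝ) < ((1:ℝ)/2)^j := by positivity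
      nlinarith
    exact lt_of_lt_of_le hpos h
  · intro t ht
    have h1 : ((1:ℝ)/2)^j ≤ t^j := pow_le_pow_left₀ (by norm_num) ht.1 j
    exact mul_le_mul h1 (exp_abs_le x ⟨by linarith [ht.1], ht.2⟩)
      (Real.exp_pos _).le (pow_nonneg (by linarith [ht.1]) j)

lemma aj_le_exp {x : ℝ} (hx : 0 ≤ x) (j : ℕ) : aj j x ≤ Real.exp (2*x) := by
  have h : (∫ t in (0:ℝ)..1, t^j * Real.exp (2*x*t)) ≤ ∫ t in (0:ℝ)..1, Real.exp (2*x) := by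
    apply intervalIntegral.integral_mono_on zero_le_one
      (by apply Continuous.intervalIntegrable; fun_prop)
      (by apply Continuous.intervalIntegrable; fun_prop)
    intro t ht
    have h1 : t^j ≤ 1 := pow_le_one₀ ht.1 ht.2
    have h2 : Real.exp (2*x*t) ≤ Real.exp (2*x) := by
      apply Real.exp_le_exp.2; nlinarith [ht.1, ht.2]
    calc t^j * Real.exp (2*x*t) ≤ 1 * Real.exp (2*x) :=
        mul_le_mul h1 h2 (Real.exp_pos _).le zero_le_one
      _ = Real.exp (2*x) := one_mul _
  simpa [aj] using h

lemma a3_ge {x : ℝ} (hx : 1 ≤ x) : Real.exp (2*x - 1) / (16*x) ≤ aj 3 x := by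
  have hx0 : (0:ℝ) < x := by linarith
  have hδ : (0:ℝ) < 1/(2*x) := by positivity
  have hδhalf : 1/(2*x) ≤ 1/2 := by
    rw [div_le_div_iff₀ (by positivity) (by norm_num)]; linarith
  have h := low (fun t => t^3 * Real.exp (2*x*t))
    (by apply Continuous.intervalIntegrable; fun_prop)
    (fun t ht => mul_nonneg (pow_nonneg ht.1 3) (Real.exp_pos _).le)
    (c := 1 - 1/(2*x)) (d := 1) (m := (1/8) * Real.exp (2*x - 1))
    (by linarith) (by linarith) le_rfl ?_
  · have he : (1/8) * Real.exp (2*x-1) * (1 - (1 - 1/(2*x))) = Real.exp (2*x-1)/(16*x) := by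
      field_simp; ring
    rw [← he]
    exact h
  · intro t ht
    have ht2 : (1/2:ℝ) ≤ t := by linarith [ht.1]
    have h1 : (1/8 : ℝ) ≤ t^3 := by
      have := pow_le_pow_left₀ (by norm_num : (0:ℝ) ≤ 1/2) ht2 3
      calc (1/8:ℝ) = (1/2)^3 := by norm_num
        _ ≤ _ := this
    have h2 : Real.exp (2*x-1) ≤ Real.exp (2*x*t) := by
      apply Real.exp_le_exp.2
      have : 2*x*(1 - 1/(2*x)) = 2*x - 1 := by field_simp
      nlinarith [ht.1]
    calc (1/8) * Real.exp (2*x-1) ≤ t^3 * Real.exp (2*x*t) :=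
        mul_le_mul h1 h2 (Real.exp_pos _).le (pow_nonneg (by linarith [ht.1]) 3)
      _ = _ := rfl

lemma a4_le_neg {x : ℝ} (hx : x < 0) : aj 4 x ≤ 24 / (-(2*x))^5 := by
  set c : ℝ := -(2*x) with hcdef
  have hc0 : 0 < c := by rw [hcdef]; linarith
  have hcne : c ≠ 0 := ne_of_gt hc0
  set F : ℝ → ℝ := fun t =>
    -Real.exp (2*x*t) * (t^4/c + 4*t^3/c^2 + 12*t^2/c^3 + 24*t/c^4 + 24/c^5) with hFdef
  have hderiv : ∀ t : ℝ, HasDerivAt F (t^4 * Real.exp (2*x*t)) t := by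
    intro t
    have h1 : HasDerivAt (fun s : ℝ => 2*x*s) (2*x) t := by
      simpa using (hasDerivAt_id t).const_mul (2*x)
    have h2 : HasDerivAt (fun s : ℝ => Real.exp (2*x*s)) (Real.exp (2*x*t) * (2*x)) t := h1.exp
    have p4 : HasDerivAt (fun s : ℝ => s^4/c) ((4:ℕ)*t^3/c) t := (hasDerivAt_pow 4 t).div_const c
    have p3 : HasDerivAt (fun s : ℝ => 4*s^3/c^2) (4*((3:ℕ)*t^2)/c^2) t :=
      ((hasDerivAt_pow 3 t).const_mul 4).div_const (c^2)
    have p2 : HasDerivAt (fun s : ℝ => 12*s^2/c^3) (12*((2:ℕ)*t^1)/c^3) t :=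
      ((hasDerivAt_pow 2 t).const_mul 12).div_const (c^3)
    have p1 : HasDerivAt (fun s : ℝ => 24*s^1/c^4) (24*((1:ℕ)*t^0)/c^4) t :=
      ((hasDerivAt_pow 1 t).const_mul 24).div_const (c^4)
    have p0 : HasDerivAt (fun s : ℝ => (24:ℝ)/c^5) 0 t := hasDerivAt_const t _
    have hsum := (((p4.add p3).add p2).add p1).add p0
    have hugly := (h2.neg).mul hsum
    have heq : F =ᶠ[nhds t] (fun s : ℝ =>
        -Real.exp (2*x*s) * ((((s^4/c + 4*s^3/c^2) + 12*s^2/c^3) + 24*s^1/c^4) + 24/c^5)) :=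
      Filter.Eventually.of_forall (fun s => by rw [hFdef]; ring)
    have hF := hugly.congr_of_eventuallyEq heq
    refine hF.congr_deriv ?_
    have hxc : 2*x = -c := by rw [hcdef]; ring
    rw [hxc]
    simp only [Pi.add_apply, Pi.neg_apply]
    push_cast
    field_simp
    ring
  have hint : aj 4 x = F 1 - F 0 := by
    unfold aj
    exact intervalIntegral.integral_eq_sub_of_hasDerivAt (fun t _ => hderiv t)
      (by apply Continuous.intervalIntegrable; fun_prop)
  have hF0 : F 0 = -(24/c^5) := by rw [hFdef]; norm_num
  have hF1 : F 1 ≤ 0 := by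
    rw [hFdef]
    have h1 : 0 ≤ (1:ℝ)^4/c + 4*1^3/c^2 + 12*1^2/c^3 + 24*1/c^4 + 24/c^5 := by positivity
    have h2 : 0 < Real.exp (2*x*1) := Real.exp_pos _
    nlinarith
  rw [hint, hF0]
  linarith

lemma pow15_le {x : ℝ} (hx : 0 ≤ x) : x^15 ≤ 15^15 * Real.exp x := by
  have h1 : x/15 ≤ Real.exp (x/15) := by
    have h := Real.add_one_le_exp (x/15 - 1)
    have h2 : Real.exp (x/15 - 1) ≤ Real.exp (x/15) := by
      apply Real.exp_le_exp.2; linarith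
    linarith
  have h3 : (x/15)^15 ≤ (Real.exp (x/15))^15 := pow_le_pow_left₀ (by positivity) h1 15
  have h4 : (Real.exp (x/15))^15 = Real.exp x := by
    rw [← Real.exp_nat_mul]
    norm_num
    rw [mul_div_cancel₀]
    norm_num
  rw [h4] at h3
  have h5 : 15^15 * (x/15)^15 ≤ 15^15 * Real.exp x :=
    mul_le_mul_of_nonneg_left h3 (by norm_num)
  calc x^15 = 15^15 * (x/15)^15 := by ring
    _ ≤ 15^15 * Real.exp x := h5

lemma eta_pos (x : ℝ) : 0 < η x := by
  have h := eta_ge x 0 (1/5) (Real.exp (-(2*|x|))) (by norm_num) le_rfl (by norm_num)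
    (Real.exp_pos _).le ?_
  · have : 0 < 3/2 * ((Real.exp (-(2*|x|)))^3 * ((1:ℝ)/5)^9) := by positivity
    linarith
  · intro s hs
    exact exp_abs_le x ⟨hs.1, by linarith [hs.2]⟩

lemma eta_ge_pos {x : ℝ} (hx : 1 ≤ x) :
    3/2 * ((Real.exp (2*x) * Real.exp (-(5/6)))^3 * (1/(12*x))^9) ≤ η x := by
  have hx0 : (0:ℝ) < x := by linarith
  have hδ : (0:ℝ) < 1/(12*x) := by positivity
  have hδb : 5*(1/(12*x)) ≤ 5/12 := by
    have h := one_div_le_one_div_of_le (by norm_num : (0:ℝ) < 12) (by linarith : (12:ℝ) ≤ 12*x)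
    linarith
  apply eta_ge x (1 - 5*(1/(12*x))) (1/(12*x)) _ hδ (by linarith) (by linarith)
    (by positivity)
  intro s hs
  have hb : 2*x*(1 - 5*(1/(12*x))) = 2*x - 5/6 := by field_simp; ring
  have h1 : 2*x - 5/6 ≤ 2*x*s := by
    have := mul_le_mul_of_nonneg_left hs.1 (by linarith : (0:ℝ) ≤ 2*x)
    rw [hb] at this
    linarith
  calc Real.exp (2*x) * Real.exp (-(5/6)) = Real.exp (2*x - 5/6) := by
        rw [← Real.exp_add]; ring_nf
    _ ≤ Real.exp (2*x*s) := Real.exp_le_exp.2 h1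

lemma eta_ge_neg {x : ℝ} (hx : x < -1) :
    3/2 * ((Real.exp (-(5/6)))^3 * (1/(12*(-x)))^9) ≤ η x := by
  have hx0 : (0:ℝ) < -x := by linarith
  have hδ : (0:ℝ) < 1/(12*(-x)) := by positivity
  have hδb : 5*(1/(12*(-x))) ≤ 5/12 := by
    have h := one_div_le_one_div_of_le (by norm_num : (0:ℝ) < 12)
      (by linarith : (12:ℝ) ≤ 12*(-x))
    linarith
  apply eta_ge x 0 (1/(12*(-x))) _ hδ le_rfl (by linarith) (Real.exp_pos _).le
  intro s hs
  apply Real.exp_le_exp.2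
  have h12 : (0:ℝ) < 12*(-x) := by linarith
  have hkey : 2*(-x)*(5*(1/(12*(-x)))) = 5/6 := by
    have e1 : 2*(-x)*(5*(1/(12*(-x)))) = (2*(-x)*5)/(12*(-x)) := by ring
    rw [e1, div_eq_iff (ne_of_gt h12)]
    ring
  have h2 := mul_le_mul_of_nonneg_left hs.2 (by linarith : (0:ℝ) ≤ 2*(-x))
  simp only [zero_add] at h2
  rw [hkey] at h2
  nlinarith [h2]


lemma u_nonneg (x : ℝ) :
    0 ≤ (1 / Δ₂ x) * (aj 4 x ^ 2 * Δ₁ x ^ 2 / η x + aj 4 x * aj 3 x ^ 2) := by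
  have h1 := delta2_pos x
  have h2 := eta_pos x
  have h3 := aj_pos 4 x
  have h4 := aj_pos 3 x
  positivity

lemma frakF_nonneg (x : ℝ) : 0 ≤ frakF x := by
  have h1 := eta_pos x
  have h3 := aj_pos 4 x
  have hU := u_nonneg x
  have hπ := Real.pi_pos
  unfold frakF
  have h5 : 0 ≤ ((1 + (1 / Δ₂ x) * (aj 4 x ^ 2 * Δ₁ x ^ 2 / η x + aj 4 x * aj 3 x ^ 2)) ^ 3)⁻¹ :=
    inv_nonneg.2 (pow_nonneg (by linarith) 3)
  have h6 : 0 ≤ (1 / (2 * Real.pi)) * (aj 4 x ^ 5 / η x) := by positivity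
  exact mul_nonneg h6 h5

lemma bound_pos {x : ℝ} (hx : 1 ≤ x) :
    Real.exp x * frakF x ≤ 12^9*16^6*3^9*15^15 := by
  have hx0 : (0:ℝ) < x := by linarith
  have hA2 := aj_pos 2 x
  have hA3 := aj_pos 3 x
  have hA4 := aj_pos 4 x
  have hη := eta_pos x
  have hΔ := delta2_pos x
  have hπ := Real.pi_pos
  set E := Real.exp (2*x) with hEdef
  have hE : 0 < E := Real.exp_pos _
  set e1 := Real.exp (-(5/6 : ℝ)) with he1def
  set e2 := Real.exp (-(1:ℝ)) with he2def
  have he1 : 0 < e1 := Real.exp_pos _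
  have he2 : 0 < e2 := Real.exp_pos _
  set U := (1 / Δ₂ x) * (aj 4 x ^ 2 * Δ₁ x ^ 2 / η x + aj 4 x * aj 3 x ^ 2) with hUdef
  have hUn : 0 ≤ U := u_nonneg x
  -- lower bound on U
  have hW : 0 ≤ aj 4 x ^ 2 * Δ₁ x ^ 2 / η x := by positivity
  have hub : aj 4 x * aj 3 x ^ 2 / Δ₂ x ≤ U := by
    have heq : U - aj 4 x * aj 3 x ^ 2 / Δ₂ x = (aj 4 x ^ 2 * Δ₁ x ^ 2 / η x) / Δ₂ x := by
      rw [hUdef]; ring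
    have h2 : 0 ≤ (aj 4 x ^ 2 * Δ₁ x ^ 2 / η x) / Δ₂ x := div_nonneg hW hΔ.le
    linarith
  have hq : 0 < aj 4 x * aj 3 x ^ 2 / Δ₂ x := by positivity
  have hinv : ((1 + U) ^ 3)⁻¹ ≤ ((aj 4 x * aj 3 x ^ 2 / Δ₂ x) ^ 3)⁻¹ := by
    apply inv_anti₀ (pow_pos hq 3)
    exact pow_le_pow_left₀ hq.le (by linarith) 3
  have hfrak1 : frakF x ≤ (1 / (2 * Real.pi)) * (aj 4 x ^ 5 / η x)
      * ((aj 4 x * aj 3 x ^ 2 / Δ₂ x) ^ 3)⁻¹ := by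
    unfold frakF
    rw [← hUdef]
    exact mul_le_mul_of_nonneg_left hinv (by positivity)
  have heq2 : (1 / (2 * Real.pi)) * (aj 4 x ^ 5 / η x)
      * ((aj 4 x * aj 3 x ^ 2 / Δ₂ x) ^ 3)⁻¹
      = (1 / (2 * Real.pi)) * ((aj 4 x ^ 2 * Δ₂ x ^ 3) / (η x * aj 3 x ^ 6)) := by
    field_simp
  -- numerator and denominator bounds
  have hA4le : aj 4 x ≤ E := aj_le_exp hx0.le 4
  have hA2le : aj 2 x ≤ E := aj_le_exp hx0.le 2
  have hΔle : Δ₂ x ≤ E * E := by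
    have h1 : aj 2 x * aj 4 x ≤ E * E := mul_le_mul hA2le hA4le hA4.le hE.le
    have h2 : 0 ≤ aj 3 x ^ 2 := sq_nonneg _
    unfold Δ₂
    linarith
  have hN : aj 4 x ^ 2 * Δ₂ x ^ 3 ≤ E ^ 8 := by
    have n1 : aj 4 x ^ 2 ≤ E ^ 2 := pow_le_pow_left₀ hA4.le hA4le 2
    have n2 : Δ₂ x ^ 3 ≤ (E * E) ^ 3 := pow_le_pow_left₀ hΔ.le hΔle 3
    have n3 : aj 4 x ^ 2 * Δ₂ x ^ 3 ≤ E ^ 2 * (E * E) ^ 3 :=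
      mul_le_mul n1 n2 (pow_nonneg hΔ.le 3) (by positivity)
    calc aj 4 x ^ 2 * Δ₂ x ^ 3 ≤ E ^ 2 * (E * E) ^ 3 := n3
      _ = E ^ 8 := by ring
  have hηge : 3/2 * ((E * e1) ^ 3 * (1/(12*x)) ^ 9) ≤ η x := eta_ge_pos hx
  have hA3ge : E * e2 / (16*x) ≤ aj 3 x := by
    have h := a3_ge hx
    have h2 : Real.exp (2*x - 1) = E * e2 := by
      rw [hEdef, he2def, ← Real.exp_add]
      ring_nf
    rw [h2] at h
    exact h
  set DL := (3/2 * ((E * e1) ^ 3 * (1/(12*x)) ^ 9)) * (E * e2 / (16*x)) ^ 6 with hDLdef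
  have hDLpos : 0 < DL := by positivity
  have hD : DL ≤ η x * aj 3 x ^ 6 := by
    apply mul_le_mul hηge (pow_le_pow_left₀ (by positivity) hA3ge 6) (by positivity)
    exact hη.le
  have hfrac : (aj 4 x ^ 2 * Δ₂ x ^ 3) / (η x * aj 3 x ^ 6) ≤ E ^ 8 / DL :=
    div_le_div₀ (by positivity) hN hDLpos hD
  have hπ1 : 1 / (2 * Real.pi) ≤ 1 := by
    rw [div_le_one (by positivity)]
    linarith [Real.pi_gt_three]
  have hfrak2 : frakF x ≤ E ^ 8 / DL := by
    calc frakF x ≤ (1 / (2 * Real.pi)) * ((aj 4 x ^ 2 * Δ₂ x ^ 3) / (η x * aj 3 x ^ 6)) := by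
          rw [← heq2]; exact hfrak1
      _ ≤ (1 / (2 * Real.pi)) * (E ^ 8 / DL) :=
          mul_le_mul_of_nonneg_left hfrac (by positivity)
      _ ≤ 1 * (E ^ 8 / DL) := mul_le_mul_of_nonneg_right hπ1 (by positivity)
      _ = E ^ 8 / DL := one_mul _
  have hsimp : E ^ 8 / DL = (2/3) * 12^9 * 16^6 * x^15 * (1/(E * (e1^3 * e2^6))) := by
    rw [hDLdef]
    field_simp
  -- exponential lower bounds
  have hexpe : Real.exp 1 < 3 := by
    have := Real.exp_one_lt_d9
    linarith
  have he1l : (1:ℝ)/3 ≤ e1 := by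
    rw [he1def]
    have h1 : Real.exp (-(1:ℝ)) ≤ Real.exp (-(5/6:ℝ)) := Real.exp_le_exp.2 (by norm_num)
    have h2 : (1:ℝ)/3 ≤ Real.exp (-(1:ℝ)) := by
      rw [Real.exp_neg]
      rw [le_inv_comm₀ (by norm_num) (Real.exp_pos 1)]
      linarith
    linarith
  have he2l : (1:ℝ)/3 ≤ e2 := by
    rw [he2def, Real.exp_neg]
    rw [le_inv_comm₀ (by norm_num) (Real.exp_pos 1)]
    linarith
  have hee : (1:ℝ)/3^9 ≤ e1^3 * e2^6 := by
    have h1 : ((1:ℝ)/3)^3 ≤ e1^3 := pow_le_pow_left₀ (by norm_num) he1l 3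
    have h2 : ((1:ℝ)/3)^6 ≤ e2^6 := pow_le_pow_left₀ (by norm_num) he2l 6
    have h3 : ((1:ℝ)/3)^3 * ((1:ℝ)/3)^6 ≤ e1^3 * e2^6 :=
      mul_le_mul h1 h2 (by norm_num) (by positivity)
    calc (1:ℝ)/3^9 = ((1:ℝ)/3)^3 * ((1:ℝ)/3)^6 := by norm_num
      _ ≤ _ := h3
  have hinv2 : 1/(E * (e1^3 * e2^6)) ≤ 3^9 * (1/E) := by
    have h1 : E * (1/3^9) ≤ E * (e1^3 * e2^6) := mul_le_mul_of_nonneg_left hee hE.le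
    have h2 : 1/(E * (e1^3 * e2^6)) ≤ 1/(E * (1/3^9)) :=
      one_div_le_one_div_of_le (by positivity) h1
    have h3 : 1/(E * ((1:ℝ)/3^9)) = 3^9 * (1/E) := by
      field_simp
    linarith
  -- final combination
  have hfinal : Real.exp x * frakF x
      ≤ Real.exp x * ((2/3) * 12^9 * 16^6 * x^15 * (3^9 * (1/E))) := by
    have s1 : frakF x ≤ (2/3) * 12^9 * 16^6 * x^15 * (3^9 * (1/E)) := by
      calc frakF x ≤ E ^ 8 / DL := hfrak2
        _ = (2/3) * 12^9 * 16^6 * x^15 * (1/(E * (e1^3 * e2^6))) := hsimp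
        _ ≤ (2/3) * 12^9 * 16^6 * x^15 * (3^9 * (1/E)) := by
            apply mul_le_mul_of_nonneg_left hinv2 (by positivity)
    exact mul_le_mul_of_nonneg_left s1 (Real.exp_pos x).le
  have hEx : Real.exp x * (1/E) = 1 / Real.exp x := by
    rw [hEdef]
    rw [show (2:ℝ)*x = x + x from by ring, Real.exp_add]
    field_simp
  have hlast : Real.exp x * ((2/3) * 12^9 * 16^6 * x^15 * (3^9 * (1/E)))
      = (2/3) * 12^9 * 16^6 * 3^9 * (x^15 * (Real.exp x * (1/E))) := by ring
  have hpow := pow15_le hx0.le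
  have hx15 : x^15 * (Real.exp x * (1/E)) ≤ 15^15 := by
    rw [hEx]
    rw [mul_one_div, div_le_iff₀ (Real.exp_pos x)]
    linarith
  calc Real.exp x * frakF x
      ≤ (2/3) * 12^9 * 16^6 * 3^9 * (x^15 * (Real.exp x * (1/E))) := by
        rw [← hlast]; exact hfinal
    _ ≤ (2/3) * 12^9 * 16^6 * 3^9 * 15^15 := by
        apply mul_le_mul_of_nonneg_left hx15 (by positivity)
    _ ≤ 12^9*16^6*3^9*15^15 := by norm_num

lemma bound_neg {x : ℝ} (hx : x < -1) : x^16 * frakF x ≤ 24^5*12^9 := by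
  have ha : (0:ℝ) < -x := by linarith
  have hA4 := aj_pos 4 x
  have hη := eta_pos x
  have hπ := Real.pi_pos
  set U := (1 / Δ₂ x) * (aj 4 x ^ 2 * Δ₁ x ^ 2 / η x + aj 4 x * aj 3 x ^ 2) with hUdef
  have hUn : 0 ≤ U := u_nonneg x
  have hinv : ((1 + U) ^ 3)⁻¹ ≤ 1 := by
    apply inv_le_one_of_one_le₀
    apply one_le_pow₀
    linarith
  have hπ1 : 1 / (2 * Real.pi) ≤ 1 := by
    rw [div_le_one (by positivity)]
    linarith [Real.pi_gt_three]
  have hfrak1 : frakF x ≤ aj 4 x ^ 5 / η x := by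
    unfold frakF
    rw [← hUdef]
    calc (1 / (2 * Real.pi)) * (aj 4 x ^ 5 / η x) * ((1 + U) ^ 3)⁻¹
        ≤ (1 / (2 * Real.pi)) * (aj 4 x ^ 5 / η x) * 1 :=
          mul_le_mul_of_nonneg_left hinv (by positivity)
      _ = (1 / (2 * Real.pi)) * (aj 4 x ^ 5 / η x) := mul_one _
      _ ≤ 1 * (aj 4 x ^ 5 / η x) := mul_le_mul_of_nonneg_right hπ1 (by positivity)
      _ = aj 4 x ^ 5 / η x := one_mul _
  have hA4le : aj 4 x ≤ 24 / (-(2*x))^5 := a4_le_neg (by linarith)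
  have hA4pow : aj 4 x ^ 5 ≤ (24 / (-(2*x))^5)^5 := pow_le_pow_left₀ hA4.le hA4le 5
  have he1 : 0 < Real.exp (-(5/6:ℝ)) := Real.exp_pos _
  have hexpe : Real.exp 1 < 3 := by linarith [Real.exp_one_lt_d9]
  have he1l : (1:ℝ)/3 ≤ Real.exp (-(5/6:ℝ)) := by
    have h1 : Real.exp (-(1:ℝ)) ≤ Real.exp (-(5/6:ℝ)) := Real.exp_le_exp.2 (by norm_num)
    have h2 : (1:ℝ)/3 ≤ Real.exp (-(1:ℝ)) := by
      rw [Real.exp_neg, le_inv_comm₀ (by norm_num) (Real.exp_pos 1)]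
      linarith
    linarith
  have hηge : (1/18) * (1/(12*(-x)))^9 ≤ η x := by
    have h := eta_ge_neg hx
    have h2 : ((1:ℝ)/3)^3 ≤ (Real.exp (-(5/6:ℝ)))^3 := pow_le_pow_left₀ (by norm_num) he1l 3
    have h3 : (0:ℝ) < (1/(12*(-x)))^9 := by positivity
    nlinarith
  have hb5 : (0:ℝ) < (-(2*x))^5 := pow_pos (by linarith) 5
  have hdiv : aj 4 x ^ 5 / η x ≤ ((24 / (-(2*x))^5)^5) / ((1/18) * (1/(12*(-x)))^9) :=
    div_le_div₀ (le_of_lt (pow_pos (div_pos (by norm_num) hb5) 5)) hA4pow (by positivity) hηge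
  have hval : ((24 / (-(2*x))^5)^5) / ((1/18) * (1/(12*(-x)))^9)
      = (24^5 * 18 * 12^9 / 2^25) * (1/(-x)^16) := by
    have hne : (-x) ≠ 0 := ne_of_gt ha
    have h1 : (-(2*x)) = 2 * (-x) := by ring
    have hxne : x ≠ 0 := by intro h; rw [h] at ha; norm_num at ha
    rw [h1]
    field_simp
  have hfrak2 : frakF x ≤ (24^5 * 18 * 12^9 / 2^25) * (1/(-x)^16) := by
    calc frakF x ≤ aj 4 x ^ 5 / η x := hfrak1
      _ ≤ ((24 / (-(2*x))^5)^5) / ((1/18) * (1/(12*(-x)))^9) := hdiv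
      _ = _ := hval
  have hx16 : x^16 = (-x)^16 := by ring
  calc x^16 * frakF x ≤ x^16 * ((24^5 * 18 * 12^9 / 2^25) * (1/(-x)^16)) := by
        apply mul_le_mul_of_nonneg_left hfrak2 (by positivity)
    _ = (24^5 * 18 * 12^9 / 2^25) * ((-x)^16 * (1/(-x)^16)) := by rw [hx16]; ring
    _ = 24^5 * 18 * 12^9 / 2^25 := by
        rw [mul_one_div, div_self (by positivity : ((-x):ℝ)^16 ≠ 0), mul_one]
    _ ≤ 24^5*12^9 := by norm_num

lemma aj_cont (j : ℕ) : Continuous (aj j) := by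
  have hc : Continuous (Function.uncurry (fun (x : ℝ) (t : ℝ) => t ^ j * Real.exp (2 * x * t))) := by
    apply Continuous.mul
    · exact (continuous_snd.pow j)
    · exact (Real.continuous_exp.comp ((continuous_const.mul continuous_fst).mul continuous_snd))
  exact intervalIntegral.continuous_parametric_intervalIntegral_of_continuous' hc 0 1

lemma frakF_cont : Continuous frakF := by
  have h0 := aj_cont 0
  have h1 := aj_cont 1
  have h2 := aj_cont 2
  have h3 := aj_cont 3
  have h4 := aj_cont 4
  have hΔ₂ : Continuous Δ₂ := ((h2.mul h4).sub (h3.pow 2))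
  have hΔ₁ : Continuous Δ₁ := ((h1.mul h3).sub (h2.pow 2))
  have hη : Continuous η := by
    unfold η
    fun_prop
  have hηne : ∀ x, η x ≠ 0 := fun x => (eta_pos x).ne'
  have hΔ₂ne : ∀ x, Δ₂ x ≠ 0 := fun x => (delta2_pos x).ne'
  have hUcont : Continuous (fun x => (1 / Δ₂ x) * (aj 4 x ^ 2 * Δ₁ x ^ 2 / η x + aj 4 x * aj 3 x ^ 2)) := by
    apply Continuous.mul
    · exact Continuous.div continuous_const hΔ₂ hΔ₂ne
    · apply Continuous.add
      · exact Continuous.div ((h4.pow 2).mul (hΔ₁.pow 2)) hη hηne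
      · exact h4.mul (h3.pow 2)
  unfold frakF
  apply Continuous.mul
  · apply Continuous.mul continuous_const
    exact Continuous.div (h4.pow 5) hη hηne
  · apply Continuous.inv₀
    · exact (continuous_const.add hUcont).pow 3
    · intro x
      apply pow_ne_zero
      exact ne_of_gt (by linarith [u_nonneg x])


end Aux

open MeasureTheory intervalIntegral Real Set in
/-- Tail bounds for the intensity function: there is an absolute constant `C > 0`
with `e^x 𝔉(x) ≤ C` for `x ≥ 1` and `x¹⁶ 𝔉(x) ≤ C` for `x < −1`; in particular
`∫_ℝ 𝔉 < ∞`. -/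
theorem stmt_16 :
    (∃ C : ℝ, 0 < C ∧
      (∀ x : ℝ, 1 ≤ x → Real.exp x * frakF x ≤ C) ∧
      (∀ x : ℝ, x < -1 → x ^ 16 * frakF x ≤ C)) ∧
    MeasureTheory.Integrable frakF := by
  have hC1 : (0:ℝ) ≤ 12^9*16^6*3^9*15^15 := by positivity
  have hC2 : (0:ℝ) ≤ 24^5*12^9 := by positivity
  constructor
  · refine ⟨12^9*16^6*3^9*15^15 + 24^5*12^9, by positivity, fun x hx => ?_, fun x hx => ?_⟩
    · linarith [bound_pos hx]
    · linarith [bound_neg hx]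
  · rw [← integrableOn_univ]
    have hsplit : (univ : Set ℝ) = Iio (-1) ∪ (Icc (-1) 1 ∪ Ioi 1) := by
      apply Set.eq_of_subset_of_subset _ (subset_univ _)
      intro y _
      rcases lt_or_ge y (-1) with h | h
      · exact Or.inl h
      · rcases le_or_gt y 1 with h2 | h2
        · exact Or.inr (Or.inl ⟨h, h2⟩)
        · exact Or.inr (Or.inr h2)
    rw [hsplit]
    apply MeasureTheory.IntegrableOn.union
    · -- Iio (-1)
      have hpre : Neg.neg ⁻¹' (Iio (-1:ℝ)) = Ioi (1:ℝ) := by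
        ext y
        simp only [mem_preimage, mem_Iio, mem_Ioi]
        constructor <;> intro h <;> linarith
      rw [← (Measure.measurePreserving_neg (volume : Measure ℝ)).integrableOn_comp_preimage
        (Homeomorph.neg ℝ).measurableEmbedding, hpre]
      apply MeasureTheory.Integrable.mono'
        (g := fun y : ℝ => (24^5*12^9 : ℝ) * y ^ (-16 : ℝ))
      · exact ((integrableOn_Ioi_rpow_of_lt (by norm_num : (-16:ℝ) < -1) one_pos).const_mul _)
      · exact ((frakF_cont.comp continuous_neg).aestronglyMeasurable)
      · filter_upwards [ae_restrict_mem measurableSet_Ioi] with y hy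
        have hy1 : (1:ℝ) < y := hy
        have hy0 : (0:ℝ) < y := by linarith
        have hb := bound_neg (show -y < -1 by linarith)
        have hb2 : y^16 * frakF (-y) ≤ 24^5*12^9 := by
          have : (-y:ℝ)^16 = y^16 := by ring
          rw [this] at hb
          exact hb
        have hfn : 0 ≤ frakF (-y) := frakF_nonneg _
        have hle : frakF (-y) ≤ (24^5*12^9 : ℝ) / y^16 := by
          rw [le_div_iff₀ (by positivity)]
          linarith [hb2]
        have hrw : (24^5*12^9 : ℝ) * y ^ (-16 : ℝ) = (24^5*12^9 : ℝ) / y^16 := by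
          rw [Real.rpow_neg hy0.le]
          rw [show ((16:ℝ) : ℝ) = ((16:ℕ) : ℝ) from by norm_num]
          rw [Real.rpow_natCast]
          rw [div_eq_mul_inv]
        rw [Function.comp_apply, Real.norm_eq_abs, abs_of_nonneg hfn, hrw]
        exact hle
    · apply MeasureTheory.IntegrableOn.union
      · exact frakF_cont.integrableOn_Icc
      · -- Ioi 1
        apply MeasureTheory.Integrable.mono'
          (g := fun y : ℝ => (12^9*16^6*3^9*15^15 : ℝ) * Real.exp (-1 * y))
        · exact ((exp_neg_integrableOn_Ioi 1 one_pos).const_mul _)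
        · exact frakF_cont.aestronglyMeasurable
        · filter_upwards [ae_restrict_mem measurableSet_Ioi] with y hy
          have hy1 : (1:ℝ) < y := hy
          have hb := bound_pos hy1.le
          have hfn : 0 ≤ frakF y := frakF_nonneg _
          have hle : frakF y ≤ (12^9*16^6*3^9*15^15 : ℝ) * Real.exp (-1 * y) := by
            have hE : 0 < Real.exp y := Real.exp_pos y
            rw [show (-1 : ℝ) * y = -y from by ring, Real.exp_neg]
            rw [← div_eq_mul_inv, le_div_iff₀ hE]
            calc frakF y * Real.exp y = Real.exp y * frakF y := by ring
              _ ≤ _ := hb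
          rw [Real.norm_eq_abs, abs_of_nonneg hfn]
          exact hle
end
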